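/- arXiv:1007.4443 — 2 statements merged into one kernel-verified Lean document; each statement's English description precedes it below -/
import Mathlib

section
/- Let d > 0 and a be real numbers, and set b = -1 + 2*d^2*sin(a/2)^2. Then b^2 ≤ 1 holds for all real a if and only if d ≤ 1. -/
open Set

lemma neg_one_add_two_mul_sq_le_one_iff (x : ℝ) : (-1 + 2 * x) ^ 2 ≤ 1 ↔ x ∈ Icc 0 1 := by
  constructor
  · intro h
    constructor <;> nlinarith
  · rintro ⟨hx0, hx1⟩
    nlinarith

theorem stmt_2 (d : ℝ) (hd : 0 < d) :
    (∀ a : ℝ, (-1 + 2 * d ^ 2 * Real.sin (a / 2) ^ 2) ^ 2 ≤ 1) ↔ d ≤ 1 := by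
  simp only [mul_assoc, neg_one_add_two_mul_sq_le_one_iff]
  constructor
  · intro h
    have hπ := (h Real.pi).2
    rw [Real.sin_pi_div_two, one_pow, mul_one] at hπ
    exact (pow_le_one_iff_of_nonneg hd.le two_ne_zero).1 hπ
  · intro hd1 a
    exact ⟨by positivity,
      mul_le_one₀ (pow_le_one₀ hd.le hd1) (sq_nonneg _) (Real.sin_sq_le_one _)⟩
end

section
/- Let A be a commutative ring, M ⊆ A^r a submodule, and ≺_pot the position-over-term module ordering induced by a monomial ordering ≺ (comparing first by component index, then by ≺). If G is a Gröbner basis of M with respect to ≺_pot and F_s = A e_1 ⊕ ⋯ ⊕ A e_s is the free submodule of the first s components, then G ∩ F_s is a Gröbner basis of M ∩ F_s. -/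
/-!
In the position-over-term order the component of the leading module monomial of `v ≠ 0` is
the last nonzero component of `v`. Hence `v ∈ F_s` exactly when its leading component is
`< s`, and the element `g ∈ G` whose leading monomial divides that of `v ∈ M ∩ F_s` has the
same leading component, so it lies in `F_s` as well.
-/

open MvPolynomial
open scoped Classical

variable {σ k : Type*} [Field k] {r : ℕ}

/-- The set of module monomials (component, exponent vector) occurring in a
vector of polynomials `v ∈ A^r`, `A = k[x_i : i ∈ σ]`. -/
noncomputable def modSupport (v : Fin r → MvPolynomial σ k) :
    Finset (Fin r × (σ →₀ ℕ)) :=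
  Finset.univ.biUnion fun i => (v i).support.image fun α => (i, α)

/-- The leading module monomial of `v` with respect to the
position-over-term ordering `≺_pot` induced by the monomial order `mo`:
module monomials are compared first by component, then by `mo`. -/
noncomputable def lmPot (mo : LinearOrder (σ →₀ ℕ)) (v : Fin r → MvPolynomial σ k) :
    Option (Fin r ×ₗ (σ →₀ ℕ)) :=
  letI := mo
  ((modSupport v).image toLex).max

/-- `G` is a Gröbner basis of the set `S ⊆ A^r` with respect to `≺_pot`:
`G ⊆ S` and for every nonzero `v ∈ S` there is `g ∈ G` whose leading module
monomial has the same component as that of `v` and whose monomial part divides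
that of `v`. -/
def IsGroebnerBasisPot (mo : LinearOrder (σ →₀ ℕ))
    (S : Set (Fin r → MvPolynomial σ k)) (G : Finset (Fin r → MvPolynomial σ k)) : Prop :=
  ↑G ⊆ S ∧ ∀ v ∈ S, v ≠ 0 → ∃ g ∈ G, ∃ a b : Fin r × (σ →₀ ℕ),
    lmPot mo g = some (toLex a) ∧ lmPot mo v = some (toLex b) ∧
    a.1 = b.1 ∧ ∀ i, a.2 i ≤ b.2 i

lemma mem_modSupport_iff (v : Fin r → MvPolynomial σ k) (i : Fin r) (α : σ →₀ ℕ) :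
    (i, α) ∈ modSupport v ↔ α ∈ (v i).support := by
  simp only [modSupport, Finset.mem_biUnion, Finset.mem_univ, true_and, Finset.mem_image,
    Prod.mk.injEq]
  constructor
  · rintro ⟨j, β, hβ, rfl, rfl⟩
    exact hβ
  · exact fun h => ⟨i, α, h, rfl, rfl⟩

lemma apply_fst_ne_zero_of_lmPot_eq_some (mo : LinearOrder (σ →₀ ℕ))
    {v : Fin r → MvPolynomial σ k} {b : Fin r × (σ →₀ ℕ)}
    (hv : lmPot mo v = some (toLex b)) : v b.1 ≠ 0 := by
  let := mo
  obtain ⟨x, hx, hxb⟩ := Finset.mem_image.mp (Finset.mem_of_max hv)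
  rw [toLex.injective hxb] at hx
  intro h0
  simpa [h0] using (mem_modSupport_iff v b.1 b.2).mp hx

lemma le_fst_of_lmPot_eq_some (mo : LinearOrder (σ →₀ ℕ))
    {v : Fin r → MvPolynomial σ k} {b : Fin r × (σ →₀ ℕ)}
    (hv : lmPot mo v = some (toLex b)) {i : Fin r} (hi : v i ≠ 0) : i ≤ b.1 := by
  let := mo
  obtain ⟨α, hα⟩ := support_nonempty.mpr hi
  have hmem : toLex (i, α) ∈ (modSupport v).image toLex :=
    Finset.mem_image_of_mem _ ((mem_modSupport_iff v i α).mpr hα)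
  -- the global instance on `σ →₀ ℕ` is the pointwise order, not `mo`
  exact @Prod.Lex.monotone_fst _ _ _ mo.toLE _ _ (Finset.le_max_of_eq hmem hv)

lemma forall_apply_eq_zero_iff_fst_lt_of_lmPot_eq_some (mo : LinearOrder (σ →₀ ℕ))
    {v : Fin r → MvPolynomial σ k} {b : Fin r × (σ →₀ ℕ)}
    (hv : lmPot mo v = some (toLex b)) (s : ℕ) :
    (∀ i : Fin r, s ≤ (i : ℕ) → v i = 0) ↔ (b.1 : ℕ) < s := by
  constructor
  · intro h
    by_contra! hs
    exact apply_fst_ne_zero_of_lmPot_eq_some mo hv (h b.1 hs)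
  · intro hs i hi
    by_contra hne
    have : (i : ℕ) ≤ b.1 := le_fst_of_lmPot_eq_some mo hv hne
    omega

theorem stmt_15_general (mo : LinearOrder (σ →₀ ℕ))
    (M : Submodule (MvPolynomial σ k) (Fin r → MvPolynomial σ k))
    (G : Finset (Fin r → MvPolynomial σ k))
    (hG : IsGroebnerBasisPot mo (M : Set (Fin r → MvPolynomial σ k)) G)
    (s : ℕ) :
    -- `G ∩ F_s` is a Gröbner basis of `M ∩ F_s`, where `F_s = A e_1 ⊕ ⋯ ⊕ A e_s`
    -- is the free submodule of the first `s` components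
    IsGroebnerBasisPot mo
      {v | v ∈ M ∧ ∀ i : Fin r, s ≤ (i : ℕ) → v i = 0}
      (G.filter fun g => ∀ i : Fin r, s ≤ (i : ℕ) → g i = 0) := by
  obtain ⟨hGM, hGB⟩ := hG
  refine ⟨fun g hg => ?_, fun v ⟨hvM, hvs⟩ hv0 => ?_⟩
  · rw [Finset.coe_filter] at hg
    exact ⟨hGM hg.1, hg.2⟩
  obtain ⟨g, hgG, a, b, hga, hvb, hab, hdiv⟩ := hGB v hvM hv0
  have hgs : ∀ i : Fin r, s ≤ (i : ℕ) → g i = 0 := by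
    rw [forall_apply_eq_zero_iff_fst_lt_of_lmPot_eq_some mo hga, hab]
    exact (forall_apply_eq_zero_iff_fst_lt_of_lmPot_eq_some mo hvb s).mp hvs
  exact ⟨g, Finset.mem_filter.mpr ⟨hgG, hgs⟩, a, b, hga, hvb, hab, hdiv⟩

theorem stmt_15 (mo : LinearOrder (σ →₀ ℕ))
    -- `mo` is a monomial ordering: global and compatible with multiplication
    (hglobal : ∀ α : σ →₀ ℕ, mo.le 0 α)
    (hcompat : ∀ α β γ : σ →₀ ℕ, mo.lt α β → mo.lt (α + γ) (β + γ))
    (M : Submodule (MvPolynomial σ k) (Fin r → MvPolynomial σ k))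
    (G : Finset (Fin r → MvPolynomial σ k))
    (hG : IsGroebnerBasisPot mo (M : Set (Fin r → MvPolynomial σ k)) G)
    (s : ℕ) :
    -- `G ∩ F_s` is a Gröbner basis of `M ∩ F_s`, where `F_s = A e_1 ⊕ ⋯ ⊕ A e_s`
    -- is the free submodule of the first `s` components
    IsGroebnerBasisPot mo
      {v | v ∈ M ∧ ∀ i : Fin r, s ≤ (i : ℕ) → v i = 0}
      (G.filter fun g => ∀ i : Fin r, s ≤ (i : ℕ) → g i = 0) :=
  stmt_15_general mo M G hG s
end
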